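/- (Jump of the 4-form in terms of Lie derivative and second fundamental form.) Under a matching satisfying the preliminary junction conditions, with generators ξ^±, η^± tangent to Σ and Φ^±-related to common fields on σ, the difference of the restricted 4-forms is (η⁺∧ξ⁺∧dξ⁺)|_Σ − (η⁻∧ξ⁻∧dξ⁻)|_Σ = η_c ξ_a ( ℓ^α e_b^β [ℒ_ξ g_{αβ}] + 2 ξ^d [H_{bd}] ) n∧w^a∧w^b∧w^c, where [·] denotes the jump across Σ and H_{ab} the generalized second fundamental forms with respect to the identified rigging. -/

import Mathlib

/-!
Coordinate (local-chart) formalization of pseudo-Riemannian geometry on `ℝⁿ`: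
manifolds are modeled by `Pt n = Fin n → ℝ`, tensor fields by their component
functions, and all differential-geometric operations (Lie derivatives, the
Levi-Civita connection via Christoffel symbols, curvature, pullbacks along
embeddings, exterior derivatives and wedge products) are defined explicitly.
-/

noncomputable section
open scoped BigOperators

abbrev Pt (n : ℕ) : Type := Fin n → ℝ

/-- Partial derivative `∂_a f` of a scalar function. -/
def pd {n : ℕ} (f : Pt n → ℝ) (a : Fin n) (x : Pt n) : ℝ :=
  fderiv ℝ f x (Pi.single a 1)

/-- Pairing of a covector (components `ω`) with a vector (components `u`). -/
def ip {n : ℕ} (ω u : Fin n → ℝ) : ℝ := ∑ α, ω α * u α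

/-- Scalar product of two vectors with respect to the metric `g`. -/
def gdot {n : ℕ} (g : Pt n → Fin n → Fin n → ℝ) (x : Pt n) (u v : Fin n → ℝ) : ℝ :=
  ∑ a, ∑ b, g x a b * u a * v b

/-- Index lowering: the 1-form `ξ_♭` metrically dual to the vector field `ξ`. -/
def flat {n : ℕ} (g : Pt n → Fin n → Fin n → ℝ) (ξ : Pt n → Pt n) (x : Pt n) (b : Fin n) : ℝ :=
  ∑ c, g x b c * ξ x c

/-- Lie derivative `(ℒ_ξ g)_{ab}` of a symmetric 2-covariant tensor field `g`
along the vector field `ξ`. -/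
def lieD {n : ℕ} (g : Pt n → Fin n → Fin n → ℝ) (ξ : Pt n → Pt n) (x : Pt n) (a b : Fin n) : ℝ :=
  ∑ c, (ξ x c * pd (fun y => g y a b) c x
      + g x c b * pd (fun y => ξ y c) a x
      + g x a c * pd (fun y => ξ y c) b x)

/-- Lie bracket `[ξ, η]` of two vector fields. -/
def lieBr {n : ℕ} (ξ η : Pt n → Pt n) (x : Pt n) : Pt n :=
  fun a => ∑ b, (ξ x b * pd (fun y => η y a) b x - η x b * pd (fun y => ξ y a) b x)

/-- Christoffel symbols `Γ^a_{bc}` of the Levi-Civita connection of `g`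
(`ginv` is the inverse metric). -/
def Chr {n : ℕ} (g ginv : Pt n → Fin n → Fin n → ℝ) (a b c : Fin n) (x : Pt n) : ℝ :=
  (1/2) * ∑ d, ginv x a d *
    (pd (fun y => g y d b) c x + pd (fun y => g y d c) b x - pd (fun y => g y b c) d x)

/-- Covariant derivative `∇_a ω_b` of a 1-form `ω`. -/
def covD {n : ℕ} (g ginv : Pt n → Fin n → Fin n → ℝ) (ω : Pt n → Fin n → ℝ)
    (x : Pt n) (a b : Fin n) : ℝ :=
  pd (fun y => ω y b) a x - ∑ c, Chr g ginv c a b x * ω x c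

/-- Covariant derivative `∇_m S_{abcd}` of a 4-covariant tensor field `S`. -/
def covD4 {n : ℕ} (g ginv : Pt n → Fin n → Fin n → ℝ)
    (S : Pt n → Fin n → Fin n → Fin n → Fin n → ℝ) (x : Pt n) (m a b c d : Fin n) : ℝ :=
  pd (fun y => S y a b c d) m x
    - ∑ e, Chr g ginv e m a x * S x e b c d
    - ∑ e, Chr g ginv e m b x * S x a e c d
    - ∑ e, Chr g ginv e m c x * S x a b e d
    - ∑ e, Chr g ginv e m d x * S x a b c e

/-- Riemann tensor `R^a_{bcd}` of the Levi-Civita connection. -/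
def Riem {n : ℕ} (g ginv : Pt n → Fin n → Fin n → ℝ) (a b c d : Fin n) (x : Pt n) : ℝ :=
  pd (fun y => Chr g ginv a d b y) c x - pd (fun y => Chr g ginv a c b y) d x
    + ∑ e, (Chr g ginv a c e x * Chr g ginv e d b x - Chr g ginv a d e x * Chr g ginv e c b x)

/-- Ricci tensor `R_{bd} = R^a_{bad}`. -/
def RicciT {n : ℕ} (g ginv : Pt n → Fin n → Fin n → ℝ) (b d : Fin n) (x : Pt n) : ℝ :=
  ∑ a, Riem g ginv a b a d x

/-- Normalized antisymmetrization of a 3-index quantity. -/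
def asym3 {ι : Type*} (T : ι → ι → ι → ℝ) (a b c : ι) : ℝ :=
  (1/6) * ∑ σ : Equiv.Perm (Fin 3),
    ((Equiv.Perm.sign σ : ℤ) : ℝ) * T (![a, b, c] (σ 0)) (![a, b, c] (σ 1)) (![a, b, c] (σ 2))

/-- Normalized antisymmetrization of a 4-index quantity. -/
def asym4 {ι : Type*} (T : ι → ι → ι → ι → ℝ) (a b c d : ι) : ℝ :=
  (1/24) * ∑ σ : Equiv.Perm (Fin 4),
    ((Equiv.Perm.sign σ : ℤ) : ℝ) *
      T (![a, b, c, d] (σ 0)) (![a, b, c, d] (σ 1)) (![a, b, c, d] (σ 2)) (![a, b, c, d] (σ 3))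

/-- Pullback `Φ* g` of a 2-covariant tensor field along a map `Φ`
(first fundamental form when `Φ` is an embedding and `g` the metric). -/
def pull2 {d m : ℕ} (Φ : Pt d → Pt m) (g : Pt m → Fin m → Fin m → ℝ)
    (p : Pt d) (a b : Fin d) : ℝ :=
  ∑ α, ∑ β, g (Φ p) α β *
    fderiv ℝ Φ p (Pi.single a 1) α * fderiv ℝ Φ p (Pi.single b 1) β

/-- The tangent frame `e_a = dΦ(∂/∂λ^a)` along the hypersurface `Σ = Φ(σ)`. -/
def eF {d : ℕ} (Φ : Pt d → Pt (d+1)) (a : Fin d) (p : Pt d) : Pt (d+1) :=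
  fderiv ℝ Φ p (Pi.single a 1)

/-- Exterior derivative `dω` of a 1-form evaluated on two vectors:
`dω(u,v) = u^α v^β (∂_α ω_β - ∂_β ω_α)`. -/
def dext {n : ℕ} (ω : Pt n → Fin n → ℝ) (x : Pt n) (u v : Fin n → ℝ) : ℝ :=
  ∑ α, ∑ β, u α * v β * (pd (fun y => ω y β) α x - pd (fun y => ω y α) β x)

/-- Wedge product of two covectors evaluated on two vectors. -/
def wdg2 {n : ℕ} (ω τ : Fin n → ℝ) (u v : Fin n → ℝ) : ℝ :=
  ip ω u * ip τ v - ip ω v * ip τ u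

/-- Wedge product of four covectors evaluated on four vectors (determinant convention). -/
def wdg4 {n : ℕ} (ω₁ ω₂ ω₃ ω₄ : Fin n → ℝ) (u : Fin 4 → Fin n → ℝ) : ℝ :=
  ∑ σ : Equiv.Perm (Fin 4), ((Equiv.Perm.sign σ : ℤ) : ℝ) *
    (ip ω₁ (u (σ 0)) * ip ω₂ (u (σ 1)) * ip ω₃ (u (σ 2)) * ip ω₄ (u (σ 3)))

/-- The 4-form `A_♭ ∧ B_♭ ∧ d(B_♭)` built from two vector fields `A`, `B`
(indices lowered with `g`), evaluated on four vectors. -/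
def form4 {n : ℕ} (g : Pt n → Fin n → Fin n → ℝ) (A B : Pt n → Pt n) (x : Pt n)
    (u : Fin 4 → Fin n → ℝ) : ℝ :=
  (1/2) * ∑ σ : Equiv.Perm (Fin 4), ((Equiv.Perm.sign σ : ℤ) : ℝ) *
    (ip (flat g A x) (u (σ 0)) * ip (flat g B x) (u (σ 1)) *
      dext (flat g B) x (u (σ 2)) (u (σ 3)))

/-- Covariant derivative `∇_{e_a} ℓ` of a vector field `ℓ` defined along `Σ = Φ(σ)`. -/
def covVecS {d : ℕ} (g ginv : Pt (d+1) → Fin (d+1) → Fin (d+1) → ℝ) (Φ : Pt d → Pt (d+1))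
    (ℓ : Pt d → Pt (d+1)) (a : Fin d) (p : Pt d) : Pt (d+1) :=
  fun μ => pd (fun q => ℓ q μ) a p + ∑ ν, ∑ ρ, Chr g ginv μ ν ρ (Φ p) * eF Φ a p ν * ℓ p ρ

/-- The lowered components `ℓ_ν` along `Σ` of a vector field `ℓ` defined along `Σ`. -/
def flatS {d : ℕ} (g : Pt (d+1) → Fin (d+1) → Fin (d+1) → ℝ) (Φ : Pt d → Pt (d+1))
    (ℓ : Pt d → Pt (d+1)) (p : Pt d) (ν : Fin (d+1)) : ℝ :=
  ∑ ρ, g (Φ p) ν ρ * ℓ p ρ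

/-- Generalized second fundamental form `H_{ab} = e_a^μ e_b^ν ∇_μ ℓ_ν`
with respect to the rigging `ℓ`. -/
def Hgen {d : ℕ} (g ginv : Pt (d+1) → Fin (d+1) → Fin (d+1) → ℝ) (Φ : Pt d → Pt (d+1))
    (ℓ : Pt d → Pt (d+1)) (a b : Fin d) (p : Pt d) : ℝ :=
  ∑ ν, eF Φ b p ν * (pd (fun q => flatS g Φ ℓ q ν) a p
    - ∑ c, (∑ μ, eF Φ a p μ * Chr g ginv c μ ν (Φ p)) * flatS g Φ ℓ p c)

/-- Transversal component `B_a = 2 ℓ^α e_a^β ∇_{[α} ω_{β]}` of `dω` along `Σ`. -/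
def Bcoef {d : ℕ} (g ginv : Pt (d+1) → Fin (d+1) → Fin (d+1) → ℝ) (Φ : Pt d → Pt (d+1))
    (ℓ : Pt d → Pt (d+1)) (ω : Pt (d+1) → Fin (d+1) → ℝ) (a : Fin d) (p : Pt d) : ℝ :=
  ∑ α, ∑ β, ℓ p α * eF Φ a p β * (covD g ginv ω (Φ p) α β - covD g ginv ω (Φ p) β α)

/-- Tangential component `A_{ab} = e_{[a}(ω_{b]})` of `dω` along `Σ`. -/
def Acoef {d : ℕ} (Φ : Pt d → Pt (d+1)) (ω : Pt (d+1) → Fin (d+1) → ℝ)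
    (a b : Fin d) (p : Pt d) : ℝ :=
  (1/2) * (pd (fun q => ip (ω (Φ q)) (eF Φ b q)) a p - pd (fun q => ip (ω (Φ q)) (eF Φ a q)) b p)

/-- The identified frame `{ℓ, e_a}` along `Σ`, indexed by `Option (Fin d)`. -/
def frameV {d : ℕ} (Φ : Pt d → Pt (d+1)) (ℓ : Pt d → Pt (d+1)) (p : Pt d) :
    Option (Fin d) → Pt (d+1)
  | none => ℓ p
  | some a => eF Φ a p

-- ===================== auxiliary toolkit =====================

theorem pd_congr' {n : ℕ} {f g : Pt n → ℝ} (h : ∀ y, f y = g y) (a : Fin n) (x : Pt n) :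
    pd f a x = pd g a x := by
  have : f = g := funext h
  rw [this]

theorem pd_add' {n : ℕ} {f g : Pt n → ℝ} {x : Pt n} (hf : DifferentiableAt ℝ f x)
    (hg : DifferentiableAt ℝ g x) (a : Fin n) :
    pd (fun y => f y + g y) a x = pd f a x + pd g a x := by
  simp [pd, fderiv_fun_add hf hg]

theorem pd_sub' {n : ℕ} {f g : Pt n → ℝ} {x : Pt n} (hf : DifferentiableAt ℝ f x)
    (hg : DifferentiableAt ℝ g x) (a : Fin n) :
    pd (fun y => f y - g y) a x = pd f a x - pd g a x := by
  simp [pd, fderiv_fun_sub hf hg]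

theorem pd_mul' {n : ℕ} {f g : Pt n → ℝ} {x : Pt n} (hf : DifferentiableAt ℝ f x)
    (hg : DifferentiableAt ℝ g x) (a : Fin n) :
    pd (fun y => f y * g y) a x = pd f a x * g x + f x * pd g a x := by
  simp [pd, fderiv_fun_mul hf hg]; ring

theorem pd_sum' {n : ℕ} {ι : Type*} {s : Finset ι} {f : ι → Pt n → ℝ} {x : Pt n}
    (hf : ∀ i ∈ s, DifferentiableAt ℝ (f i) x) (a : Fin n) :
    pd (fun y => ∑ i ∈ s, f i y) a x = ∑ i ∈ s, pd (f i) a x := by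
  simp [pd, fderiv_fun_sum hf]

theorem fderiv_eval' {m : ℕ} {E : Type*} [NormedAddCommGroup E] [NormedSpace ℝ E]
    {Φ : E → Pt m} {x : E} (hΦ : DifferentiableAt ℝ Φ x) (μ : Fin m) (v : E) :
    fderiv ℝ (fun q => Φ q μ) x v = fderiv ℝ Φ x v μ := by
  have : (fun q => Φ q μ)
      = (ContinuousLinearMap.proj (R := ℝ) (φ := fun _ : Fin m => ℝ) μ) ∘ Φ := rfl
  rw [this, fderiv_comp x (ContinuousLinearMap.proj μ).differentiableAt hΦ]
  simp

theorem fderiv_expand' {m : ℕ} {f : Pt m → ℝ} {x : Pt m} (v : Pt m) :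
    fderiv ℝ f x v = ∑ α, pd f α x * v α := by
  have hv : v = ∑ α : Fin m, v α • (Pi.single α (1:ℝ) : Pt m) := by
    funext j
    simp [Pi.single_apply, Finset.sum_apply]
  conv_lhs => rw [hv]
  rw [map_sum]
  refine Finset.sum_congr rfl fun α _ => ?_
  rw [map_smul]
  simp [pd, mul_comm]

/-- chain rule -/
theorem cdtop_diff {E F : Type*} [NormedAddCommGroup E] [NormedSpace ℝ E]
    [NormedAddCommGroup F] [NormedSpace ℝ F] {f : E → F}
    (h : ContDiff ℝ (⊤ : ℕ∞) f) : Differentiable ℝ f :=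
  h.differentiable (by simpa using WithTop.coe_le_coe.mpr (le_top : (1:ℕ∞) ≤ ⊤))

theorem pd_comp' {d : ℕ} {f : Pt (d+1) → ℝ} {Φ : Pt d → Pt (d+1)} {p : Pt d}
    (hf : DifferentiableAt ℝ f (Φ p)) (hΦ : DifferentiableAt ℝ Φ p) (a : Fin d) :
    pd (fun q => f (Φ q)) a p = ∑ α, pd f α (Φ p) * eF Φ a p α := by
  unfold pd
  rw [show (fun q => f (Φ q)) = f ∘ Φ from rfl, fderiv_comp p hf hΦ]
  simp only [ContinuousLinearMap.coe_comp', Function.comp_apply]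
  rw [fderiv_expand']
  rfl

theorem contDiff_comp_proj {m : ℕ} {E : Type*} [NormedAddCommGroup E] [NormedSpace ℝ E]
    {Φ : E → Pt m} (hΦ : ContDiff ℝ (⊤ : ℕ∞) Φ) (μ : Fin m) :
    ContDiff ℝ (⊤ : ℕ∞) (fun q => Φ q μ) :=
  (ContinuousLinearMap.proj (R := ℝ) (φ := fun _ : Fin m => ℝ) μ).contDiff.comp hΦ

/-- Clairaut for scalar functions -/
theorem pd_pd_symm' {m : ℕ} {F : Pt m → ℝ} (hF : ContDiff ℝ (⊤ : ℕ∞) F) (a b : Fin m) (p : Pt m) :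
    pd (fun q => pd F b q) a p = pd (fun q => pd F a q) b p := by
  have hd : Differentiable ℝ (fderiv ℝ F) :=
    (hF.fderiv_right (m := ((⊤:ℕ∞) : WithTop ℕ∞)) (by simp)).differentiable
      (by simpa using WithTop.coe_le_coe.mpr (le_top : (1:ℕ∞) ≤ ⊤))
  have key : ∀ v w : Pt m, fderiv ℝ (fun q => fderiv ℝ F q v) p w
      = fderiv ℝ (fderiv ℝ F) p w v := by
    intro v w
    rw [fderiv_clm_apply (hd p) (differentiableAt_const v)]
    simp
  have hsymm : IsSymmSndFDerivAt ℝ F p := by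
    apply ContDiffAt.isSymmSndFDerivAt hF.contDiffAt
    simpa using WithTop.coe_le_coe.mpr (le_top : (2:ℕ∞) ≤ ⊤)
  unfold pd
  rw [key, key, hsymm]

theorem eF_eq_pd {d : ℕ} {Φ : Pt d → Pt (d+1)} (hΦ : ContDiff ℝ (⊤ : ℕ∞) Φ)
    (a : Fin d) (q : Pt d) (μ : Fin (d+1)) :
    eF Φ a q μ = pd (fun y => Φ y μ) a q := by
  rw [eF, pd, fderiv_eval' (cdtop_diff hΦ).differentiableAt]

theorem eF_diff {d : ℕ} {Φ : Pt d → Pt (d+1)} (hΦ : ContDiff ℝ (⊤ : ℕ∞) Φ)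
    (a : Fin d) (μ : Fin (d+1)) :
    Differentiable ℝ (fun q => eF Φ a q μ) := by
  have hd : Differentiable ℝ (fderiv ℝ Φ) :=
    (hΦ.fderiv_right (m := ((⊤:ℕ∞) : WithTop ℕ∞)) (by simp)).differentiable
      (by simpa using WithTop.coe_le_coe.mpr (le_top : (1:ℕ∞) ≤ ⊤))
  show Differentiable ℝ fun q => fderiv ℝ Φ q (Pi.single a 1) μ
  fun_prop

theorem pd_eF_symm {d : ℕ} {Φ : Pt d → Pt (d+1)} (hΦ : ContDiff ℝ (⊤ : ℕ∞) Φ)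
    (a b : Fin d) (μ : Fin (d+1)) (p : Pt d) :
    pd (fun q => eF Φ b q μ) a p = pd (fun q => eF Φ a q μ) b p := by
  rw [pd_congr' (fun q => eF_eq_pd hΦ b q μ), pd_congr' (fun q => eF_eq_pd hΦ a q μ),
    pd_pd_symm' (contDiff_comp_proj hΦ μ)]

section Sum3
variable {I : Type*} [Fintype I]

theorem sum3_swap12 (f : I → I → I → ℝ) :
    (∑ i, ∑ j, ∑ k, f i j k) = ∑ i, ∑ j, ∑ k, f j i k :=
  Finset.sum_comm

theorem sum3_swap23 (f : I → I → I → ℝ) :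
    (∑ i, ∑ j, ∑ k, f i j k) = ∑ i, ∑ j, ∑ k, f i k j :=
  Finset.sum_congr rfl fun _ _ => Finset.sum_comm

/-- `∑ f i j k = ∑ f k i j` -/
theorem sum3_kij (f : I → I → I → ℝ) :
    (∑ i, ∑ j, ∑ k, f i j k) = ∑ i, ∑ j, ∑ k, f k i j :=
  (sum3_swap12 f).trans (sum3_swap23 (fun i j k => f j i k))

/-- `∑ f i j k = ∑ f k j i` -/
theorem sum3_kji (f : I → I → I → ℝ) :
    (∑ i, ∑ j, ∑ k, f i j k) = ∑ i, ∑ j, ∑ k, f k j i :=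
  ((sum3_swap12 f).trans (sum3_swap23 (fun i j k => f j i k))).trans
    (sum3_swap12 (fun i j k => f k i j))

theorem sum3_jki (f : I → I → I → ℝ) :
    (∑ i, ∑ j, ∑ k, f i j k) = ∑ i, ∑ j, ∑ k, f j k i :=
  (sum3_kij (fun i j k => f j k i)).symm

end Sum3

theorem dext_antisymm {n : ℕ} (ω : Pt n → Fin n → ℝ) (x : Pt n) (u v : Fin n → ℝ) :
    dext ω x u v = - dext ω x v u := by
  unfold dext
  rw [Finset.sum_comm, ← Finset.sum_neg_distrib]
  refine Finset.sum_congr rfl fun α _ => ?_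
  rw [← Finset.sum_neg_distrib]
  refine Finset.sum_congr rfl fun β _ => ?_
  ring

theorem dext_self {n : ℕ} (ω : Pt n → Fin n → ℝ) (x : Pt n) (u : Fin n → ℝ) :
    dext ω x u u = 0 := by
  have := dext_antisymm ω x u u
  linarith

section MatrixInv
variable {m : ℕ} (G Ginv : Fin m → Fin m → ℝ)

theorem ginv_symm (hGs : ∀ a b, G a b = G b a)
    (hinv : ∀ a b, (∑ c, Ginv a c * G c b) = if a = b then (1:ℝ) else 0) :
    ∀ a b, Ginv a b = Ginv b a := by
  intro a b
  set M : Matrix (Fin m) (Fin m) ℝ := Matrix.of G with hM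
  set N : Matrix (Fin m) (Fin m) ℝ := Matrix.of Ginv with hN
  have h1 : N * M = 1 := by
    ext i j
    simp [Matrix.mul_apply, hM, hN, hinv i j, Matrix.one_apply]
  have hMt : M.transpose = M := by
    ext i j; simp [hM, Matrix.transpose_apply, hGs i j]
  have h2 : N.transpose * M = 1 := by
    have := congrArg Matrix.transpose (mul_eq_one_comm.mp h1)
    rwa [Matrix.transpose_mul, hMt, Matrix.transpose_one] at this
  have h3 : N.transpose = N := by
    calc N.transpose = N.transpose * (M * N) := by
          rw [mul_eq_one_comm.mp h1, Matrix.mul_one]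
      _ = (N.transpose * M) * N := by rw [Matrix.mul_assoc]
      _ = N := by rw [h2, Matrix.one_mul]
  have := congrFun (congrFun h3 a) b
  simpa [hN, Matrix.transpose_apply] using this.symm

theorem gmul_ginv (hGs : ∀ a b, G a b = G b a)
    (hinv : ∀ a b, (∑ c, Ginv a c * G c b) = if a = b then (1:ℝ) else 0) :
    ∀ a b, (∑ c, G a c * Ginv c b) = if a = b then (1:ℝ) else 0 := by
  intro a b
  have hsym := ginv_symm G Ginv hGs hinv
  calc (∑ c, G a c * Ginv c b) = ∑ c, Ginv b c * G c a := by
        refine Finset.sum_congr rfl fun c _ => ?_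
        rw [hGs a c, hsym c b]; ring
    _ = if a = b then (1:ℝ) else 0 := by rw [hinv b a]; simp [eq_comm]
end MatrixInv

/-- lowered Christoffel symbol -/
theorem chr_lowered {n : ℕ} (g ginv : Pt n → Fin n → Fin n → ℝ)
    (hgsymm : ∀ x a b, g x a b = g x b a)
    (hinv : ∀ x a b, (∑ c, ginv x a c * g x c b) = if a = b then (1:ℝ) else 0)
    (x : Pt n) (ρ μ ν : Fin n) :
    (∑ c, g x ρ c * Chr g ginv c μ ν x)
      = (1/2) * (pd (fun y => g y ρ μ) ν x + pd (fun y => g y ρ ν) μ x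
          - pd (fun y => g y μ ν) ρ x) := by
  unfold Chr
  have step : ∀ c, g x ρ c * ((1/2) * ∑ e, ginv x c e *
      (pd (fun y => g y e μ) ν x + pd (fun y => g y e ν) μ x - pd (fun y => g y μ ν) e x))
      = (1/2) * ∑ e, (g x ρ c * ginv x c e) *
      (pd (fun y => g y e μ) ν x + pd (fun y => g y e ν) μ x - pd (fun y => g y μ ν) e x) := by
    intro c
    simp only [Finset.mul_sum]
    refine Finset.sum_congr rfl fun e _ => ?_
    ring
  rw [Finset.sum_congr rfl fun c _ => step c, ← Finset.mul_sum]
  congr 1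
  rw [Finset.sum_comm]
  have : ∀ e, (∑ c, (g x ρ c * ginv x c e) *
      (pd (fun y => g y e μ) ν x + pd (fun y => g y e ν) μ x - pd (fun y => g y μ ν) e x))
      = (if ρ = e then (1:ℝ) else 0) *
      (pd (fun y => g y e μ) ν x + pd (fun y => g y e ν) μ x - pd (fun y => g y μ ν) e x) := by
    intro e
    rw [← Finset.sum_mul, gmul_ginv (g x) (ginv x) (hgsymm x) (hinv x)]
  rw [Finset.sum_congr rfl fun e _ => this e]
  simp
theorem core_id {n : ℕ} (L E X dL : Fin n → ℝ) (G dX : Fin n → Fin n → ℝ)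
    (dG : Fin n → Fin n → Fin n → ℝ) (hGs : ∀ a b, G a b = G b a) :
    (∑ i, ∑ j, ∑ k, L i * E j * (X k * (dG i j k - dG j i k) + G j k * dX i k - G i k * dX j k))
      = (∑ i, ∑ j, ∑ k, L i * E j * (X k * dG k i j + G k j * dX i k + G i k * dX j k))
        - 2 * (∑ c, ∑ ρ, ((∑ μ, dG μ c ρ * E μ) * X c * L ρ
            + G c ρ * (∑ β, dX β c * E β) * L ρ + G c ρ * X c * dL ρ))
        + 2 * ∑ ν, X ν * ((∑ ρ, ((∑ μ, dG μ ν ρ * E μ) * L ρ + G ν ρ * dL ρ))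
            - ∑ μ, ∑ ρ, E μ * L ρ * ((1/2) * (dG ν ρ μ + dG μ ρ ν - dG ρ μ ν))) := by
  simp only [Finset.mul_sum, Finset.sum_mul, mul_add, add_mul, mul_sub, sub_mul,
    Finset.sum_add_distrib, Finset.sum_sub_distrib]
  have congr3 : ∀ f g : Fin n → Fin n → Fin n → ℝ, (∀ i j k, f i j k = g i j k) →
      (∑ i, ∑ j, ∑ k, f i j k) = ∑ i, ∑ j, ∑ k, g i j k := fun f g h =>
    Finset.sum_congr rfl fun i _ => Finset.sum_congr rfl fun j _ =>
      Finset.sum_congr rfl fun k _ => h i j k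
  have hpull : ∀ f : Fin n → Fin n → Fin n → ℝ,
      (∑ i, ∑ j, ∑ k, 2 * f i j k) = 2 * ∑ i, ∑ j, ∑ k, f i j k := fun f => by
    simp only [Finset.mul_sum]
  have hR2 : (∑ i, ∑ j, ∑ k, L i * E j * (G k j * dX i k))
      = ∑ i, ∑ j, ∑ k, L i * E j * (G j k * dX i k) :=
    congr3 _ _ fun i j k => by rw [hGs k j]
  have hR4 : (∑ x, ∑ x1, ∑ i, 2 * (dG i x x1 * E i * X x * L x1))
      = 2 * ∑ i, ∑ j, ∑ k, L i * E j * (X k * dG j k i) :=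
    ((sum3_kij fun a b c => 2 * (dG c a b * E c * X a * L b)).trans
      (congr3 _ _ fun i j k => by ring)).trans (hpull _)
  have hR5 : (∑ x, ∑ x1, ∑ i, 2 * (G x x1 * (dX i x * E i) * L x1))
      = 2 * ∑ i, ∑ j, ∑ k, L i * E j * (G i k * dX j k) :=
    ((sum3_kij fun a b c => 2 * (G a b * (dX c a * E c) * L b)).trans
      (congr3 _ _ fun i j k => by rw [hGs k i]; ring)).trans (hpull _)
  have hR6 : (∑ x : Fin n, ∑ i : Fin n, 2 * (G x i * X x * dL i))
      = ∑ x : Fin n, ∑ i : Fin n, 2 * (X x * (G x i * dL i)) :=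
    Finset.sum_congr rfl fun x _ => Finset.sum_congr rfl fun i _ => by ring
  have hR7 : (∑ x, ∑ x1, ∑ i, 2 * (X x * (dG i x x1 * E i * L x1)))
      = 2 * ∑ i, ∑ j, ∑ k, L i * E j * (X k * dG j k i) :=
    ((sum3_kij fun a b c => 2 * (X a * (dG c a b * E c * L b))).trans
      (congr3 _ _ fun i j k => by ring)).trans (hpull _)
  have hR9 : (∑ x, ∑ x1, ∑ i, 2 * (X x * (E x1 * L i * (1/2 * dG x i x1))))
      = ∑ i, ∑ j, ∑ k, L i * E j * (X k * dG k i j) :=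
    (sum3_kji fun a b c => 2 * (X a * (E b * L c * (1/2 * dG a c b)))).trans
      (congr3 _ _ fun i j k => by ring)
  have hR10 : (∑ x, ∑ x1, ∑ i, 2 * (X x * (E x1 * L i * (1/2 * dG x1 i x))))
      = ∑ i, ∑ j, ∑ k, L i * E j * (X k * dG j i k) :=
    (sum3_kji fun a b c => 2 * (X a * (E b * L c * (1/2 * dG b c a)))).trans
      (congr3 _ _ fun i j k => by ring)
  have hR11 : (∑ x, ∑ x1, ∑ i, 2 * (X x * (E x1 * L i * (1/2 * dG i x1 x))))
      = ∑ i, ∑ j, ∑ k, L i * E j * (X k * dG i j k) :=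
    (sum3_kji fun a b c => 2 * (X a * (E b * L c * (1/2 * dG c b a)))).trans
      (congr3 _ _ fun i j k => by ring)
  rw [hR2, hR4, hR5, hR6, hR7, hR9, hR10, hR11]
  ring

/-- signed sum over permutations of a 4-fold product -/
def P4 (r0 r1 r2 r3 : Fin 4 → ℝ) : ℝ :=
  ∑ σ : Equiv.Perm (Fin 4), ((Equiv.Perm.sign σ : ℤ) : ℝ) *
    (r0 (σ 0) * r1 (σ 1) * r2 (σ 2) * r3 (σ 3))

theorem P4_reindex (τ : Equiv.Perm (Fin 4)) (r0 r1 r2 r3 : Fin 4 → ℝ) :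
    P4 r0 r1 r2 r3 = ((Equiv.Perm.sign τ : ℤ) : ℝ) *
      ∑ σ : Equiv.Perm (Fin 4), ((Equiv.Perm.sign σ : ℤ) : ℝ) *
        (r0 (σ (τ 0)) * r1 (σ (τ 1)) * r2 (σ (τ 2)) * r3 (σ (τ 3))) := by
  unfold P4
  rw [← Equiv.sum_comp (Equiv.mulRight τ)
    (fun σ => ((Equiv.Perm.sign σ : ℤ) : ℝ) * (r0 (σ 0) * r1 (σ 1) * r2 (σ 2) * r3 (σ 3)))]
  rw [Finset.mul_sum]
  refine Finset.sum_congr rfl fun σ _ => ?_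
  simp only [Equiv.coe_mulRight, Equiv.Perm.mul_apply, Equiv.Perm.sign_mul]
  have hs : ∀ s t : ℤˣ, (((s * t : ℤˣ) : ℤ) : ℝ) = ((s : ℤ) : ℝ) * ((t : ℤ) : ℝ) := by
    intro s t; push_cast; ring
  rw [hs]
  have h2 : ((Equiv.Perm.sign τ : ℤ) : ℝ) = 1 ∨ ((Equiv.Perm.sign τ : ℤ) : ℝ) = -1 := by
    rcases Int.units_eq_one_or (Equiv.Perm.sign τ) with h | h <;> simp [h]
  rcases h2 with h | h <;> rw [h] <;> ring

theorem P4_swap23 (r0 r1 r2 r3 : Fin 4 → ℝ) : P4 r0 r1 r3 r2 = - P4 r0 r1 r2 r3 := by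
  rw [P4_reindex (Equiv.swap 2 3) r0 r1 r2 r3]
  have h0 : (Equiv.swap (2 : Fin 4) 3) 0 = 0 := by decide
  have h1 : (Equiv.swap (2 : Fin 4) 3) 1 = 1 := by decide
  have h2 : (Equiv.swap (2 : Fin 4) 3) 2 = 3 := by decide
  have h3 : (Equiv.swap (2 : Fin 4) 3) 3 = 2 := by decide
  have hsgn : ((Equiv.Perm.sign (Equiv.swap (2 : Fin 4) 3) : ℤ) : ℝ) = -1 := by
    rw [Equiv.Perm.sign_swap (by decide)]; simp
  rw [h0, h1, h2, h3, hsgn, neg_mul, neg_neg, one_mul]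
  unfold P4
  refine Finset.sum_congr rfl fun σ _ => by ring

theorem P4_eq02 (f r1 r3 : Fin 4 → ℝ) : P4 f r1 f r3 = 0 := by
  have h := P4_reindex (Equiv.swap 0 2) f r1 f r3
  have h0 : (Equiv.swap (0 : Fin 4) 2) 0 = 2 := by decide
  have h1 : (Equiv.swap (0 : Fin 4) 2) 1 = 1 := by decide
  have h2 : (Equiv.swap (0 : Fin 4) 2) 2 = 0 := by decide
  have h3 : (Equiv.swap (0 : Fin 4) 2) 3 = 3 := by decide
  have hsgn : ((Equiv.Perm.sign (Equiv.swap (0 : Fin 4) 2) : ℤ) : ℝ) = -1 := by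
    rw [Equiv.Perm.sign_swap (by decide)]; simp
  rw [h0, h1, h2, h3, hsgn] at h
  have hT : (∑ σ : Equiv.Perm (Fin 4), ((Equiv.Perm.sign σ : ℤ) : ℝ) *
      (f (σ 2) * r1 (σ 1) * f (σ 0) * r3 (σ 3))) = P4 f r1 f r3 := by
    unfold P4; exact Finset.sum_congr rfl fun σ _ => by ring
  rw [hT] at h
  linarith

theorem P4_eq12 (r0 f r3 : Fin 4 → ℝ) : P4 r0 f f r3 = 0 := by
  have h := P4_reindex (Equiv.swap 1 2) r0 f f r3
  have h0 : (Equiv.swap (1 : Fin 4) 2) 0 = 0 := by decide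
  have h1 : (Equiv.swap (1 : Fin 4) 2) 1 = 2 := by decide
  have h2 : (Equiv.swap (1 : Fin 4) 2) 2 = 1 := by decide
  have h3 : (Equiv.swap (1 : Fin 4) 2) 3 = 3 := by decide
  have hsgn : ((Equiv.Perm.sign (Equiv.swap (1 : Fin 4) 2) : ℤ) : ℝ) = -1 := by
    rw [Equiv.Perm.sign_swap (by decide)]; simp
  rw [h0, h1, h2, h3, hsgn] at h
  have hT : (∑ σ : Equiv.Perm (Fin 4), ((Equiv.Perm.sign σ : ℤ) : ℝ) *
      (r0 (σ 0) * f (σ 2) * f (σ 1) * r3 (σ 3))) = P4 r0 f f r3 := by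
    unfold P4; exact Finset.sum_congr rfl fun σ _ => by ring
  rw [hT] at h
  linarith

/-- `wc ∧ wa ∧ n ∧ wb = n ∧ wa ∧ wb ∧ wc` -/
theorem P4_rotate (nn wa wb wc : Fin 4 → ℝ) : P4 wc wa nn wb = P4 nn wa wb wc := by
  have h := P4_reindex (Equiv.swap 0 2 * Equiv.swap 2 3) nn wa wb wc
  have h0 : ((Equiv.swap (0 : Fin 4) 2 * Equiv.swap 2 3 : Equiv.Perm (Fin 4))) 0 = 2 := by decide
  have h1 : ((Equiv.swap (0 : Fin 4) 2 * Equiv.swap 2 3 : Equiv.Perm (Fin 4))) 1 = 1 := by decide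
  have h2 : ((Equiv.swap (0 : Fin 4) 2 * Equiv.swap 2 3 : Equiv.Perm (Fin 4))) 2 = 3 := by decide
  have h3 : ((Equiv.swap (0 : Fin 4) 2 * Equiv.swap 2 3 : Equiv.Perm (Fin 4))) 3 = 0 := by decide
  have hsgn : ((Equiv.Perm.sign (Equiv.swap (0:Fin 4) 2 * Equiv.swap 2 3) : ℤ) : ℝ) = 1 := by
    rw [Equiv.Perm.sign_mul, Equiv.Perm.sign_swap (by decide), Equiv.Perm.sign_swap (by decide)]
    simp
  rw [h0, h1, h2, h3, hsgn] at h
  rw [h, one_mul]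
  unfold P4
  refine Finset.sum_congr rfl fun σ _ => by ring

theorem dext_tangent {d : ℕ} (ω : Pt (d+1) → Fin (d+1) → ℝ) (Φ : Pt d → Pt (d+1))
    (hω : ∀ β, Differentiable ℝ (fun y => ω y β)) (hΦ : ContDiff ℝ (⊤ : ℕ∞) Φ)
    (a b : Fin d) (p : Pt d) :
    dext ω (Φ p) (eF Φ a p) (eF Φ b p)
      = pd (fun q => ∑ β, ω (Φ q) β * eF Φ b q β) a p
        - pd (fun q => ∑ β, ω (Φ q) β * eF Φ a q β) b p := by
  have hΦd : Differentiable ℝ Φ := cdtop_diff hΦ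
  have heF : ∀ (c : Fin d) (μ : Fin (d+1)), Differentiable ℝ (fun q => eF Φ c q μ) :=
    fun c μ => eF_diff hΦ c μ
  have hexp : ∀ a' b' : Fin d, pd (fun q => ∑ β, ω (Φ q) β * eF Φ b' q β) a' p
      = ∑ β, ((∑ α, pd (fun y => ω y β) α (Φ p) * eF Φ a' p α) * eF Φ b' p β
              + ω (Φ p) β * pd (fun q => eF Φ b' q β) a' p) := by
    intro a' b'
    rw [pd_sum' (fun β _ => by
      have h1 := hω β; have h2 := heF b' β; fun_prop)]
    refine Finset.sum_congr rfl fun β _ => ?_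
    rw [pd_mul' (by have h1 := hω β; fun_prop) ((heF b' β).differentiableAt)]
    rw [pd_comp' ((hω β) (Φ p)) (hΦd.differentiableAt)]
  rw [hexp a b, hexp b a]
  have hfix : (∑ β, ((∑ α, pd (fun y => ω y β) α (Φ p) * eF Φ a p α) * eF Φ b p β
              + ω (Φ p) β * pd (fun q => eF Φ b q β) a p))
      = ∑ β, ((∑ α, pd (fun y => ω y β) α (Φ p) * eF Φ a p α) * eF Φ b p β
              + ω (Φ p) β * pd (fun q => eF Φ a q β) b p) :=
    Finset.sum_congr rfl fun β _ => by rw [pd_eF_symm hΦ a b β p]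
  rw [hfix]
  rw [← Finset.sum_sub_distrib]
  have hsimp : ∀ β, ((∑ α, pd (fun y => ω y β) α (Φ p) * eF Φ a p α) * eF Φ b p β
              + ω (Φ p) β * pd (fun q => eF Φ a q β) b p)
      - ((∑ α, pd (fun y => ω y β) α (Φ p) * eF Φ b p α) * eF Φ a p β
              + ω (Φ p) β * pd (fun q => eF Φ a q β) b p)
      = (∑ α, pd (fun y => ω y β) α (Φ p) * eF Φ a p α * eF Φ b p β)
        - (∑ α, pd (fun y => ω y β) α (Φ p) * eF Φ b p α * eF Φ a p β) := by
    intro β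
    rw [Finset.sum_mul, Finset.sum_mul]
    ring
  rw [Finset.sum_congr rfl fun β _ => hsimp β, Finset.sum_sub_distrib]
  unfold dext
  have hsplit : ∀ α β, eF Φ a p α * eF Φ b p β *
        (pd (fun y => ω y β) α (Φ p) - pd (fun y => ω y α) β (Φ p))
      = eF Φ a p α * eF Φ b p β * pd (fun y => ω y β) α (Φ p)
        - eF Φ a p α * eF Φ b p β * pd (fun y => ω y α) β (Φ p) := fun α β => by ring
  rw [Finset.sum_congr rfl fun α _ => Finset.sum_congr rfl fun β _ => hsplit α β]
  rw [Finset.sum_congr rfl fun α (_ : α ∈ Finset.univ) => Finset.sum_sub_distrib _ _,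
    Finset.sum_sub_distrib]
  congr 1
  · rw [Finset.sum_comm]
    exact Finset.sum_congr rfl fun β _ => Finset.sum_congr rfl fun α _ => by ring
  · exact Finset.sum_congr rfl fun α _ => Finset.sum_congr rfl fun β _ => by ring

theorem dext_transversal {d : ℕ} (g ginv : Pt (d+1) → Fin (d+1) → Fin (d+1) → ℝ)
    (Φ : Pt d → Pt (d+1)) (ℓ : Pt d → Pt (d+1)) (ξ : Pt (d+1) → Pt (d+1))
    (hg : ∀ a b, Differentiable ℝ fun x => g x a b)
    (hgsymm : ∀ x a b, g x a b = g x b a)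
    (hinv : ∀ x a b, (∑ c, ginv x a c * g x c b) = if a = b then (1:ℝ) else 0)
    (hΦ : Differentiable ℝ Φ) (hℓ : Differentiable ℝ ℓ) (hξ : Differentiable ℝ ξ)
    (b : Fin d) (p : Pt d) :
    dext (flat g ξ) (Φ p) (ℓ p) (eF Φ b p)
      = (∑ α, ∑ β, ℓ p α * eF Φ b p β * lieD g ξ (Φ p) α β)
        - 2 * pd (fun q => gdot g (Φ q) (ξ (Φ q)) (ℓ q)) b p
        + 2 * ∑ ν, ξ (Φ p) ν * (pd (fun q => flatS g Φ ℓ q ν) b p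
            - ∑ c, (∑ μ, eF Φ b p μ * Chr g ginv c μ ν (Φ p)) * flatS g Φ ℓ p c) := by
  have hξc : ∀ c, Differentiable ℝ (fun y => ξ y c) := fun c => by fun_prop
  have hℓc : ∀ c, Differentiable ℝ (fun q => ℓ q c) := fun c => by fun_prop
  -- canonical triple-sum form of the left-hand side
  have hflat : ∀ β α, pd (fun y => flat g ξ y β) α (Φ p)
      = ∑ c, (pd (fun y => g y β c) α (Φ p) * ξ (Φ p) c
          + g (Φ p) β c * pd (fun y => ξ y c) α (Φ p)) := by
    intro β α
    have h0 : (fun y => flat g ξ y β) = fun y => ∑ c, g y β c * ξ y c := rfl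
    rw [h0, pd_sum' (fun c _ => by have h1 := hg β c; have h2 := hξc c; fun_prop)]
    exact Finset.sum_congr rfl fun c _ => pd_mul' ((hg β c) (Φ p)) ((hξc c) (Φ p)) α
  have hdext : dext (flat g ξ) (Φ p) (ℓ p) (eF Φ b p)
      = ∑ i, ∑ j, ∑ k, ℓ p i * eF Φ b p j *
          (ξ (Φ p) k * (pd (fun y => g y j k) i (Φ p) - pd (fun y => g y i k) j (Φ p))
            + g (Φ p) j k * pd (fun y => ξ y k) i (Φ p)
            - g (Φ p) i k * pd (fun y => ξ y k) j (Φ p)) := by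
    unfold dext
    refine Finset.sum_congr rfl fun i _ => Finset.sum_congr rfl fun j _ => ?_
    rw [hflat j i, hflat i j, ← Finset.sum_sub_distrib, Finset.mul_sum]
    exact Finset.sum_congr rfl fun k _ => by ring
  -- canonical form of the Lie-derivative term
  have hlie : (∑ α, ∑ β, ℓ p α * eF Φ b p β * lieD g ξ (Φ p) α β)
      = ∑ i, ∑ j, ∑ k, ℓ p i * eF Φ b p j *
          (ξ (Φ p) k * pd (fun y => g y i j) k (Φ p)
            + g (Φ p) k j * pd (fun y => ξ y k) i (Φ p)
            + g (Φ p) i k * pd (fun y => ξ y k) j (Φ p)) := by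
    refine Finset.sum_congr rfl fun i _ => Finset.sum_congr rfl fun j _ => ?_
    unfold lieD
    rw [Finset.mul_sum]
  -- expansion of the derivative of g(ξ,ℓ)
  have hgdot : pd (fun q => gdot g (Φ q) (ξ (Φ q)) (ℓ q)) b p
      = ∑ c, ∑ ρ, ((∑ μ, pd (fun y => g y c ρ) μ (Φ p) * eF Φ b p μ) * ξ (Φ p) c * ℓ p ρ
          + g (Φ p) c ρ * (∑ β, pd (fun y => ξ y c) β (Φ p) * eF Φ b p β) * ℓ p ρ
          + g (Φ p) c ρ * ξ (Φ p) c * pd (fun q => ℓ q ρ) b p) := by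
    have h0 : (fun q => gdot g (Φ q) (ξ (Φ q)) (ℓ q))
        = fun q => ∑ c, ∑ ρ, g (Φ q) c ρ * ξ (Φ q) c * ℓ q ρ := rfl
    rw [h0, pd_sum' (fun c _ => by
      refine DifferentiableAt.fun_sum (fun ρ _ => ?_)
      have h1 := hg c ρ; have h2 := hξc c; have h3 := hℓc ρ; fun_prop)]
    refine Finset.sum_congr rfl fun c _ => ?_
    rw [pd_sum' (fun ρ _ => by
      have h1 := hg c ρ; have h2 := hξc c; have h3 := hℓc ρ; fun_prop)]
    refine Finset.sum_congr rfl fun ρ _ => ?_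
    rw [pd_mul' (x := p) (by have h1 := hg c ρ; have h2 := hξc c; fun_prop) ((hℓc ρ) p)]
    rw [pd_mul' (x := p) (by have h1 := hg c ρ; fun_prop) (by have h2 := hξc c; fun_prop)]
    rw [pd_comp' ((hg c ρ) (Φ p)) (hΦ.differentiableAt),
      pd_comp' ((hξc c) (Φ p)) (hΦ.differentiableAt)]
    ring
  -- expansion of the derivative of flatS
  have hflatS : ∀ ν, pd (fun q => flatS g Φ ℓ q ν) b p
      = ∑ ρ, ((∑ μ, pd (fun y => g y ν ρ) μ (Φ p) * eF Φ b p μ) * ℓ p ρ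
          + g (Φ p) ν ρ * pd (fun q => ℓ q ρ) b p) := by
    intro ν
    have h0 : (fun q => flatS g Φ ℓ q ν) = fun q => ∑ ρ, g (Φ q) ν ρ * ℓ q ρ := rfl
    rw [h0, pd_sum' (fun ρ _ => by have h1 := hg ν ρ; have h3 := hℓc ρ; fun_prop)]
    refine Finset.sum_congr rfl fun ρ _ => ?_
    rw [pd_mul' (x := p) (by have h1 := hg ν ρ; fun_prop) ((hℓc ρ) p),
      pd_comp' ((hg ν ρ) (Φ p)) (hΦ.differentiableAt)]
  -- the Christoffel contraction
  have hchr : ∀ ν, (∑ c, (∑ μ, eF Φ b p μ * Chr g ginv c μ ν (Φ p)) * flatS g Φ ℓ p c)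
      = ∑ μ, ∑ ρ, eF Φ b p μ * ℓ p ρ *
          ((1/2) * (pd (fun y => g y ρ μ) ν (Φ p) + pd (fun y => g y ρ ν) μ (Φ p)
            - pd (fun y => g y μ ν) ρ (Φ p))) := by
    intro ν
    have step1 : (∑ c, (∑ μ, eF Φ b p μ * Chr g ginv c μ ν (Φ p)) * flatS g Φ ℓ p c)
        = ∑ c, ∑ μ, ∑ ρ, eF Φ b p μ * Chr g ginv c μ ν (Φ p) * (g (Φ p) c ρ * ℓ p ρ) := by
      refine Finset.sum_congr rfl fun c _ => ?_
      rw [Finset.sum_mul]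
      refine Finset.sum_congr rfl fun μ _ => ?_
      have h0 : flatS g Φ ℓ p c = ∑ ρ, g (Φ p) c ρ * ℓ p ρ := rfl
      rw [h0, Finset.mul_sum]
    rw [step1, sum3_kij (fun c μ ρ => eF Φ b p μ * Chr g ginv c μ ν (Φ p) * (g (Φ p) c ρ * ℓ p ρ))]
    refine Finset.sum_congr rfl fun μ _ => Finset.sum_congr rfl fun ρ _ => ?_
    have step2 : (∑ c, eF Φ b p μ * Chr g ginv c μ ν (Φ p) * (g (Φ p) c ρ * ℓ p ρ))
        = eF Φ b p μ * ℓ p ρ * (∑ c, g (Φ p) ρ c * Chr g ginv c μ ν (Φ p)) := by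
      rw [Finset.mul_sum]
      exact Finset.sum_congr rfl fun c _ => by rw [hgsymm (Φ p) c ρ]; ring
    rw [step2, chr_lowered g ginv hgsymm hinv (Φ p) ρ μ ν]
  -- put the right-hand side into canonical form and conclude
  rw [hdext, hgdot]
  have hrw : ∀ ν, ξ (Φ p) ν * (pd (fun q => flatS g Φ ℓ q ν) b p
        - ∑ c, (∑ μ, eF Φ b p μ * Chr g ginv c μ ν (Φ p)) * flatS g Φ ℓ p c)
      = ξ (Φ p) ν * ((∑ ρ, ((∑ μ, pd (fun y => g y ν ρ) μ (Φ p) * eF Φ b p μ) * ℓ p ρ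
          + g (Φ p) ν ρ * pd (fun q => ℓ q ρ) b p))
        - ∑ μ, ∑ ρ, eF Φ b p μ * ℓ p ρ *
          ((1/2) * (pd (fun y => g y ρ μ) ν (Φ p) + pd (fun y => g y ρ ν) μ (Φ p)
            - pd (fun y => g y μ ν) ρ (Φ p)))) := fun ν => by rw [hflatS ν, hchr ν]
  rw [Finset.sum_congr rfl fun ν _ => hrw ν, hlie]
  exact core_id (ℓ p) (eF Φ b p) (ξ (Φ p)) (fun ρ => pd (fun q => ℓ q ρ) b p) (g (Φ p))
    (fun i k => pd (fun y => ξ y k) i (Φ p))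
    (fun i j k => pd (fun y => g y j k) i (Φ p)) (hgsymm (Φ p))

theorem sum_rot3 {A B C : Type*} [Fintype A] [Fintype B] [Fintype C] (f : A → B → C → ℝ) :
    (∑ a, ∑ b, ∑ i, f a b i) = ∑ i, ∑ a, ∑ b, f a b i :=
  (Finset.sum_congr rfl fun _ _ => Finset.sum_comm).trans Finset.sum_comm

theorem gdot_symm' {n : ℕ} (g : Pt n → Fin n → Fin n → ℝ) (x : Pt n)
    (hs : ∀ a b, g x a b = g x b a) (u v : Fin n → ℝ) :
    gdot g x u v = gdot g x v u := by
  unfold gdot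
  rw [Finset.sum_comm]
  exact Finset.sum_congr rfl fun b _ => Finset.sum_congr rfl fun a _ => by
    rw [hs a b]; ring

theorem gdot_expand_right {n : ℕ} {ι : Type*} [Fintype ι] (g : Pt n → Fin n → Fin n → ℝ)
    (x : Pt n) (u : Fin n → ℝ) (w : Fin n → ℝ) (c : ι → ℝ) (v : ι → Fin n → ℝ)
    (hw : ∀ μ, w μ = ∑ i, c i * v i μ) :
    gdot g x u w = ∑ i, c i * gdot g x u (v i) := by
  unfold gdot
  have step : ∀ a b : Fin n, g x a b * u a * w b = ∑ i, c i * (g x a b * u a * v i b) := by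
    intro a b
    rw [hw b, Finset.mul_sum]
    exact Finset.sum_congr rfl fun i _ => by ring
  rw [Finset.sum_congr rfl fun a (_ : a ∈ Finset.univ) =>
    Finset.sum_congr rfl fun b (_ : b ∈ Finset.univ) => step a b]
  rw [sum_rot3 (fun a b i => c i * (g x a b * u a * v i b))]
  refine Finset.sum_congr rfl fun i _ => ?_
  rw [Finset.mul_sum]
  exact Finset.sum_congr rfl fun a _ => by rw [Finset.mul_sum]

theorem ip_flat {n : ℕ} (g : Pt n → Fin n → Fin n → ℝ) (A : Pt n → Pt n) (x : Pt n)
    (u : Fin n → ℝ) : ip (flat g A x) u = gdot g x u (A x) := by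
  unfold ip flat gdot
  refine Finset.sum_congr rfl fun b _ => ?_
  rw [Finset.sum_mul]
  exact Finset.sum_congr rfl fun c _ => by ring

theorem P4_decomp0 {d : ℕ} (cN : ℝ) (cW : Fin d → ℝ) (N : Fin 4 → ℝ) (W : Fin d → Fin 4 → ℝ)
    (r1 r2 r3 : Fin 4 → ℝ) :
    P4 (fun i => cN * N i + ∑ c, cW c * W c i) r1 r2 r3
      = cN * P4 N r1 r2 r3 + ∑ c, cW c * P4 (W c) r1 r2 r3 := by
  unfold P4
  have key : ∀ σ : Equiv.Perm (Fin 4),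
      ((Equiv.Perm.sign σ : ℤ) : ℝ) * ((cN * N (σ 0) + ∑ c, cW c * W c (σ 0))
          * r1 (σ 1) * r2 (σ 2) * r3 (σ 3))
      = cN * (((Equiv.Perm.sign σ : ℤ) : ℝ) * (N (σ 0) * r1 (σ 1) * r2 (σ 2) * r3 (σ 3)))
        + ∑ c, cW c * (((Equiv.Perm.sign σ : ℤ) : ℝ)
            * (W c (σ 0) * r1 (σ 1) * r2 (σ 2) * r3 (σ 3))) := by
    intro σ
    simp only [add_mul, mul_add, Finset.sum_mul, Finset.mul_sum]
    congr 1
    · ring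
    · exact Finset.sum_congr rfl fun c _ => by ring
  rw [Finset.sum_congr rfl fun σ _ => key σ, Finset.sum_add_distrib]
  congr 1
  · exact (Finset.mul_sum _ _ _).symm
  · rw [Finset.sum_comm]
    exact Finset.sum_congr rfl fun c _ => (Finset.mul_sum _ _ _).symm

theorem P4_decomp1 {d : ℕ} (cN : ℝ) (cW : Fin d → ℝ) (N : Fin 4 → ℝ) (W : Fin d → Fin 4 → ℝ)
    (r0 r2 r3 : Fin 4 → ℝ) :
    P4 r0 (fun i => cN * N i + ∑ c, cW c * W c i) r2 r3
      = cN * P4 r0 N r2 r3 + ∑ c, cW c * P4 r0 (W c) r2 r3 := by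
  unfold P4
  have key : ∀ σ : Equiv.Perm (Fin 4),
      ((Equiv.Perm.sign σ : ℤ) : ℝ) * (r0 (σ 0) * (cN * N (σ 1) + ∑ c, cW c * W c (σ 1))
          * r2 (σ 2) * r3 (σ 3))
      = cN * (((Equiv.Perm.sign σ : ℤ) : ℝ) * (r0 (σ 0) * N (σ 1) * r2 (σ 2) * r3 (σ 3)))
        + ∑ c, cW c * (((Equiv.Perm.sign σ : ℤ) : ℝ)
            * (r0 (σ 0) * W c (σ 1) * r2 (σ 2) * r3 (σ 3))) := by
    intro σ
    simp only [add_mul, mul_add, Finset.sum_mul, Finset.mul_sum]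
    congr 1
    · ring
    · exact Finset.sum_congr rfl fun c _ => by ring
  rw [Finset.sum_congr rfl fun σ _ => key σ, Finset.sum_add_distrib]
  congr 1
  · exact (Finset.mul_sum _ _ _).symm
  · rw [Finset.sum_comm]
    exact Finset.sum_congr rfl fun c _ => (Finset.mul_sum _ _ _).symm

theorem formdiff_eq {n dd : ℕ} (g1 g2 : Pt n → Fin n → Fin n → ℝ) (A1 B1 A2 B2 : Pt n → Pt n)
    (x1 x2 : Pt n) (u1 u2 : Fin 4 → Fin n → ℝ)
    (J : Fin dd → ℝ) (NN : Fin 4 → ℝ) (WW : Fin dd → Fin 4 → ℝ) (F1 F2 : Fin 4 → ℝ)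
    (hA1 : ∀ i, ip (flat g1 A1 x1) (u1 i) = F1 i)
    (hA2 : ∀ i, ip (flat g2 A2 x2) (u2 i) = F1 i)
    (hB1 : ∀ i, ip (flat g1 B1 x1) (u1 i) = F2 i)
    (hB2 : ∀ i, ip (flat g2 B2 x2) (u2 i) = F2 i)
    (hD : ∀ i j, dext (flat g1 B1) x1 (u1 i) (u1 j) - dext (flat g2 B2) x2 (u2 i) (u2 j)
        = ∑ b, J b * (NN i * WW b j - NN j * WW b i)) :
    form4 g1 A1 B1 x1 u1 - form4 g2 A2 B2 x2 u2 = ∑ b, J b * P4 F1 F2 NN (WW b) := by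
  unfold form4
  rw [← mul_sub, ← Finset.sum_sub_distrib]
  have key : ∀ σ : Equiv.Perm (Fin 4),
      ((Equiv.Perm.sign σ : ℤ) : ℝ) * (ip (flat g1 A1 x1) (u1 (σ 0))
          * ip (flat g1 B1 x1) (u1 (σ 1)) * dext (flat g1 B1) x1 (u1 (σ 2)) (u1 (σ 3)))
        - ((Equiv.Perm.sign σ : ℤ) : ℝ) * (ip (flat g2 A2 x2) (u2 (σ 0))
          * ip (flat g2 B2 x2) (u2 (σ 1)) * dext (flat g2 B2) x2 (u2 (σ 2)) (u2 (σ 3)))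
      = ∑ b, J b * (((Equiv.Perm.sign σ : ℤ) : ℝ)
          * (F1 (σ 0) * F2 (σ 1) * (NN (σ 2) * WW b (σ 3) - NN (σ 3) * WW b (σ 2)))) := by
    intro σ
    rw [hA1, hA2, hB1, hB2]
    calc ((Equiv.Perm.sign σ : ℤ) : ℝ) * (F1 (σ 0) * F2 (σ 1)
            * dext (flat g1 B1) x1 (u1 (σ 2)) (u1 (σ 3)))
          - ((Equiv.Perm.sign σ : ℤ) : ℝ) * (F1 (σ 0) * F2 (σ 1)
            * dext (flat g2 B2) x2 (u2 (σ 2)) (u2 (σ 3)))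
        = ((Equiv.Perm.sign σ : ℤ) : ℝ) * (F1 (σ 0) * F2 (σ 1))
            * (dext (flat g1 B1) x1 (u1 (σ 2)) (u1 (σ 3))
              - dext (flat g2 B2) x2 (u2 (σ 2)) (u2 (σ 3))) := by ring
      _ = ((Equiv.Perm.sign σ : ℤ) : ℝ) * (F1 (σ 0) * F2 (σ 1))
            * ∑ b, J b * (NN (σ 2) * WW b (σ 3) - NN (σ 3) * WW b (σ 2)) := by
          rw [hD (σ 2) (σ 3)]
      _ = ∑ b, J b * (((Equiv.Perm.sign σ : ℤ) : ℝ)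
            * (F1 (σ 0) * F2 (σ 1) * (NN (σ 2) * WW b (σ 3) - NN (σ 3) * WW b (σ 2)))) := by
          rw [Finset.mul_sum]
          exact Finset.sum_congr rfl fun b _ => by ring
  rw [Finset.sum_congr rfl fun σ _ => key σ, Finset.sum_comm, Finset.mul_sum]
  refine Finset.sum_congr rfl fun b _ => ?_
  have split : ∀ σ : Equiv.Perm (Fin 4),
      J b * (((Equiv.Perm.sign σ : ℤ) : ℝ)
          * (F1 (σ 0) * F2 (σ 1) * (NN (σ 2) * WW b (σ 3) - NN (σ 3) * WW b (σ 2))))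
      = J b * (((Equiv.Perm.sign σ : ℤ) : ℝ) * (F1 (σ 0) * F2 (σ 1) * NN (σ 2) * WW b (σ 3)))
        - J b * (((Equiv.Perm.sign σ : ℤ) : ℝ)
            * (F1 (σ 0) * F2 (σ 1) * WW b (σ 2) * NN (σ 3))) := fun σ => by ring
  rw [Finset.sum_congr rfl fun σ _ => split σ, Finset.sum_sub_distrib,
    ← Finset.mul_sum, ← Finset.mul_sum]
  have e1 : (∑ σ : Equiv.Perm (Fin 4), ((Equiv.Perm.sign σ : ℤ) : ℝ)
      * (F1 (σ 0) * F2 (σ 1) * NN (σ 2) * WW b (σ 3))) = P4 F1 F2 NN (WW b) := rfl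
  have e2 : (∑ σ : Equiv.Perm (Fin 4), ((Equiv.Perm.sign σ : ℤ) : ℝ)
      * (F1 (σ 0) * F2 (σ 1) * WW b (σ 2) * NN (σ 3))) = P4 F1 F2 (WW b) NN := rfl
  rw [e1, e2, P4_swap23 F1 F2 NN (WW b)]
  ring

theorem P4_reduce {d : ℕ} (NN : Fin 4 → ℝ) (WW : Fin d → Fin 4 → ℝ)
    (ηL ξL : ℝ) (ηA ξA : Fin d → ℝ) (b : Fin d) :
    P4 (fun i => ηL * NN i + ∑ c, ηA c * WW c i)
        (fun i => ξL * NN i + ∑ c, ξA c * WW c i) NN (WW b)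
      = ∑ c, ηA c * ∑ a, ξA a * P4 NN (WW a) (WW b) (WW c) := by
  rw [P4_decomp0 ηL ηA NN WW, P4_eq02]
  rw [show ηL * 0 = 0 from by ring, zero_add]
  refine Finset.sum_congr rfl fun c _ => ?_
  rw [P4_decomp1 ξL ξA NN WW, P4_eq12]
  rw [show ξL * 0 = 0 from by ring, zero_add]
  refine congrArg _ (Finset.sum_congr rfl fun a _ => ?_)
  rw [P4_rotate NN (WW a) (WW b) (WW c)]

theorem final_reorder {d : ℕ} (J ηA ξA : Fin d → ℝ) (Q : Fin d → Fin d → Fin d → ℝ) :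
    (∑ b, J b * ∑ c, ηA c * ∑ a, ξA a * Q a b c)
      = ∑ a, ∑ b, ∑ c, ηA c * ξA a * J b * Q a b c := by
  have h1 : ∀ b, J b * ∑ c, ηA c * ∑ a, ξA a * Q a b c
      = ∑ c, ∑ a, J b * (ηA c * (ξA a * Q a b c)) := by
    intro b
    rw [Finset.mul_sum]
    refine Finset.sum_congr rfl fun c _ => ?_
    rw [show ηA c * ∑ a, ξA a * Q a b c = ∑ a, ηA c * (ξA a * Q a b c) from
      Finset.mul_sum _ _ _, Finset.mul_sum]
  rw [Finset.sum_congr rfl fun b _ => h1 b,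
    sum3_jki (fun b c a => J b * (ηA c * (ξA a * Q a b c)))]
  exact Finset.sum_congr rfl fun a _ => Finset.sum_congr rfl fun b _ =>
    Finset.sum_congr rfl fun c _ => by ring
/-- equation (eq:diff) of the paper: under the preliminary junction
conditions, with generators tangent to `Σ` and with common frame components, the jump
of the restricted 4-form `η∧ξ∧dξ` across `Σ` is
`η_c ξ_a ( ℓ^α e_b^β [ℒ_ξ g_{αβ}] + 2 ξ^d [H_{bd}] ) n ∧ w^a ∧ w^b ∧ w^c`. -/
theorem jump_four_form_lie_and_H {d : ℕ}
    (gp ginvp gm ginvm : Pt (d+1) → Fin (d+1) → Fin (d+1) → ℝ)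
    (Φp Φm : Pt d → Pt (d+1)) (ℓp ℓm : Pt d → Pt (d+1))
    (np : Pt d → Fin (d+1) → ℝ) (wp : Fin d → Pt d → Fin (d+1) → ℝ)
    (nm : Pt d → Fin (d+1) → ℝ) (wm : Fin d → Pt d → Fin (d+1) → ℝ)
    (ξp ηp ξm ηm : Pt (d+1) → Pt (d+1)) (ξc ηc : Fin d → Pt d → ℝ)
    (hgp : ∀ a b, ContDiff ℝ (⊤ : ℕ∞) fun x => gp x a b)
    (hgm : ∀ a b, ContDiff ℝ (⊤ : ℕ∞) fun x => gm x a b)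
    (hginvp : ∀ a b, ContDiff ℝ (⊤ : ℕ∞) fun x => ginvp x a b)
    (hginvm : ∀ a b, ContDiff ℝ (⊤ : ℕ∞) fun x => ginvm x a b)
    (hgpsymm : ∀ x a b, gp x a b = gp x b a)
    (hgmsymm : ∀ x a b, gm x a b = gm x b a)
    (hinvp : ∀ x a b, (∑ c, ginvp x a c * gp x c b) = if a = b then (1:ℝ) else 0)
    (hinvm : ∀ x a b, (∑ c, ginvm x a c * gm x c b) = if a = b then (1:ℝ) else 0)
    (hΦp : ContDiff ℝ (⊤ : ℕ∞) Φp) (hΦpinj : Function.Injective Φp)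
    (hΦpimm : ∀ p, Function.Injective (fderiv ℝ Φp p))
    (hΦm : ContDiff ℝ (⊤ : ℕ∞) Φm) (hΦminj : Function.Injective Φm)
    (hΦmimm : ∀ p, Function.Injective (fderiv ℝ Φm p))
    (hℓp : ContDiff ℝ (⊤ : ℕ∞) ℓp) (hℓm : ContDiff ℝ (⊤ : ℕ∞) ℓm)
    (hξp : ContDiff ℝ (⊤ : ℕ∞) ξp) (hξm : ContDiff ℝ (⊤ : ℕ∞) ξm)
    (hηp : ContDiff ℝ (⊤ : ℕ∞) ηp) (hηm : ContDiff ℝ (⊤ : ℕ∞) ηm)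
    -- preliminary junction conditions
    (hmatch : ∀ p a b, pull2 Φp gp p a b = pull2 Φm gm p a b)
    -- duality of the coframes with the rigged frames on both sides
    (hnℓp : ∀ p, ip (np p) (ℓp p) = 1) (hnep : ∀ p a, ip (np p) (eF Φp a p) = 0)
    (hwℓp : ∀ p a, ip (wp a p) (ℓp p) = 0)
    (hwep : ∀ p a b, ip (wp a p) (eF Φp b p) = if a = b then (1:ℝ) else 0)
    (hnℓm : ∀ p, ip (nm p) (ℓm p) = 1) (hnem : ∀ p a, ip (nm p) (eF Φm a p) = 0)
    (hwℓm : ∀ p a, ip (wm a p) (ℓm p) = 0)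
    (hwem : ∀ p a b, ip (wm a p) (eF Φm b p) = if a = b then (1:ℝ) else 0)
    -- identification of the riggings
    (hℓnorm : ∀ p, gdot gp (Φp p) (ℓp p) (ℓp p) = gdot gm (Φm p) (ℓm p) (ℓm p))
    (hℓe : ∀ p a, gdot gp (Φp p) (ℓp p) (eF Φp a p) = gdot gm (Φm p) (ℓm p) (eF Φm a p))
    -- ξ^±, η^± are tangent to Σ^± with common frame components
    (htanξp : ∀ p, ξp (Φp p) = ∑ b, ξc b p • eF Φp b p)
    (htanξm : ∀ p, ξm (Φm p) = ∑ b, ξc b p • eF Φm b p)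
    (htanηp : ∀ p, ηp (Φp p) = ∑ b, ηc b p • eF Φp b p)
    (htanηm : ∀ p, ηm (Φm p) = ∑ b, ηc b p • eF Φm b p) :
    ∀ p (pick : Fin 4 → Option (Fin d)),
      form4 gp ηp ξp (Φp p) (fun i => frameV Φp ℓp p (pick i))
        - form4 gm ηm ξm (Φm p) (fun i => frameV Φm ℓm p (pick i))
      = ∑ a, ∑ b, ∑ c,
          gdot gp (Φp p) (ηp (Φp p)) (eF Φp c p) * gdot gp (Φp p) (ξp (Φp p)) (eF Φp a p) *
            (((∑ α, ∑ β, ℓp p α * eF Φp b p β * lieD gp ξp (Φp p) α β)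
                - ∑ α, ∑ β, ℓm p α * eF Φm b p β * lieD gm ξm (Φm p) α β)
              + 2 * ∑ dd, ξc dd p *
                  (Hgen gp ginvp Φp ℓp b dd p - Hgen gm ginvm Φm ℓm b dd p)) *
            wdg4 (np p) (wp a p) (wp b p) (wp c p) (fun i => frameV Φp ℓp p (pick i)) := by
  intro p pick
  -- basic differentiability facts
  have hgpd : ∀ a b, Differentiable ℝ fun x => gp x a b := fun a b => cdtop_diff (hgp a b)
  have hgmd : ∀ a b, Differentiable ℝ fun x => gm x a b := fun a b => cdtop_diff (hgm a b)
  have hΦpd : Differentiable ℝ Φp := cdtop_diff hΦp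
  have hΦmd : Differentiable ℝ Φm := cdtop_diff hΦm
  have hℓpd : Differentiable ℝ ℓp := cdtop_diff hℓp
  have hℓmd : Differentiable ℝ ℓm := cdtop_diff hℓm
  have hξpd : Differentiable ℝ ξp := cdtop_diff hξp
  have hξmd : Differentiable ℝ ξm := cdtop_diff hξm
  -- pointwise (component) tangency
  have hξpt : ∀ q μ, ξp (Φp q) μ = ∑ b, ξc b q * eF Φp b q μ := fun q μ => by
    have := congrFun (htanξp q) μ
    simpa [Finset.sum_apply] using this
  have hξmt : ∀ q μ, ξm (Φm q) μ = ∑ b, ξc b q * eF Φm b q μ := fun q μ => by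
    have := congrFun (htanξm q) μ
    simpa [Finset.sum_apply] using this
  have hηpt : ∀ q μ, ηp (Φp q) μ = ∑ b, ηc b q * eF Φp b q μ := fun q μ => by
    have := congrFun (htanηp q) μ
    simpa [Finset.sum_apply] using this
  have hηmt : ∀ q μ, ηm (Φm q) μ = ∑ b, ηc b q * eF Φm b q μ := fun q μ => by
    have := congrFun (htanηm q) μ
    simpa [Finset.sum_apply] using this
  -- key matching of frame scalar products: e-slots
  have hpull : ∀ q a b', gdot gp (Φp q) (eF Φp a q) (eF Φp b' q)
      = gdot gm (Φm q) (eF Φm a q) (eF Φm b' q) := fun q a b' => hmatch q a b'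
  have key_e : ∀ (q : Pt d) (v : Option (Fin d)) (b' : Fin d),
      gdot gp (Φp q) (frameV Φp ℓp q v) (eF Φp b' q)
        = gdot gm (Φm q) (frameV Φm ℓm q v) (eF Φm b' q) := by
    intro q v b'
    cases v with
    | none =>
        show gdot gp (Φp q) (ℓp q) (eF Φp b' q) = gdot gm (Φm q) (ℓm q) (eF Φm b' q)
        exact hℓe q b'
    | some a => exact hpull q a b'
  -- the middle (common) term of the transversal expansion
  have hmid : (fun q => gdot gp (Φp q) (ξp (Φp q)) (ℓp q))
      = (fun q => gdot gm (Φm q) (ξm (Φm q)) (ℓm q)) := by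
    funext q
    have h1 : gdot gp (Φp q) (ξp (Φp q)) (ℓp q)
        = ∑ b, ξc b q * gdot gp (Φp q) (ℓp q) (eF Φp b q) := by
      rw [gdot_symm' gp (Φp q) (hgpsymm (Φp q)) (ξp (Φp q)) (ℓp q)]
      exact gdot_expand_right gp (Φp q) (ℓp q) (ξp (Φp q)) (fun b => ξc b q)
        (fun b => eF Φp b q) (hξpt q)
    have h2 : gdot gm (Φm q) (ξm (Φm q)) (ℓm q)
        = ∑ b, ξc b q * gdot gm (Φm q) (ℓm q) (eF Φm b q) := by
      rw [gdot_symm' gm (Φm q) (hgmsymm (Φm q)) (ξm (Φm q)) (ℓm q)]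
      exact gdot_expand_right gm (Φm q) (ℓm q) (ξm (Φm q)) (fun b => ξc b q)
        (fun b => eF Φm b q) (hξmt q)
    rw [h1, h2]
    exact Finset.sum_congr rfl fun b _ => by rw [hℓe q b]
  -- jump of the transversal component of dξ
  have hjump : ∀ b0 : Fin d,
      dext (flat gp ξp) (Φp p) (ℓp p) (eF Φp b0 p)
        - dext (flat gm ξm) (Φm p) (ℓm p) (eF Φm b0 p)
      = (((∑ α, ∑ β, ℓp p α * eF Φp b0 p β * lieD gp ξp (Φp p) α β)
            - ∑ α, ∑ β, ℓm p α * eF Φm b0 p β * lieD gm ξm (Φm p) α β)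
          + 2 * ∑ dd, ξc dd p *
              (Hgen gp ginvp Φp ℓp b0 dd p - Hgen gm ginvm Φm ℓm b0 dd p)) := by
    intro b0
    rw [dext_transversal gp ginvp Φp ℓp ξp hgpd hgpsymm hinvp hΦpd hℓpd hξpd b0 p,
      dext_transversal gm ginvm Φm ℓm ξm hgmd hgmsymm hinvm hΦmd hℓmd hξmd b0 p]
    have hHp : (∑ ν, ξp (Φp p) ν * (pd (fun q => flatS gp Φp ℓp q ν) b0 p
          - ∑ c, (∑ μ, eF Φp b0 p μ * Chr gp ginvp c μ ν (Φp p)) * flatS gp Φp ℓp p c))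
        = ∑ dd, ξc dd p * Hgen gp ginvp Φp ℓp b0 dd p := by
      have step : ∀ ν, ξp (Φp p) ν * (pd (fun q => flatS gp Φp ℓp q ν) b0 p
            - ∑ c, (∑ μ, eF Φp b0 p μ * Chr gp ginvp c μ ν (Φp p)) * flatS gp Φp ℓp p c)
          = ∑ dd, ξc dd p * (eF Φp dd p ν * (pd (fun q => flatS gp Φp ℓp q ν) b0 p
            - ∑ c, (∑ μ, eF Φp b0 p μ * Chr gp ginvp c μ ν (Φp p)) * flatS gp Φp ℓp p c)) := by
        intro ν
        rw [hξpt p ν, Finset.sum_mul]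
        exact Finset.sum_congr rfl fun dd _ => by ring
      rw [Finset.sum_congr rfl fun ν _ => step ν, Finset.sum_comm]
      exact Finset.sum_congr rfl fun dd _ => (Finset.mul_sum _ _ _).symm
    have hHm : (∑ ν, ξm (Φm p) ν * (pd (fun q => flatS gm Φm ℓm q ν) b0 p
          - ∑ c, (∑ μ, eF Φm b0 p μ * Chr gm ginvm c μ ν (Φm p)) * flatS gm Φm ℓm p c))
        = ∑ dd, ξc dd p * Hgen gm ginvm Φm ℓm b0 dd p := by
      have step : ∀ ν, ξm (Φm p) ν * (pd (fun q => flatS gm Φm ℓm q ν) b0 p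
            - ∑ c, (∑ μ, eF Φm b0 p μ * Chr gm ginvm c μ ν (Φm p)) * flatS gm Φm ℓm p c)
          = ∑ dd, ξc dd p * (eF Φm dd p ν * (pd (fun q => flatS gm Φm ℓm q ν) b0 p
            - ∑ c, (∑ μ, eF Φm b0 p μ * Chr gm ginvm c μ ν (Φm p)) * flatS gm Φm ℓm p c)) := by
        intro ν
        rw [hξmt p ν, Finset.sum_mul]
        exact Finset.sum_congr rfl fun dd _ => by ring
      rw [Finset.sum_congr rfl fun ν _ => step ν, Finset.sum_comm]
      exact Finset.sum_congr rfl fun dd _ => (Finset.mul_sum _ _ _).symm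
    rw [hHp, hHm, hmid]
    rw [show (∑ dd, ξc dd p * (Hgen gp ginvp Φp ℓp b0 dd p - Hgen gm ginvm Φm ℓm b0 dd p))
        = (∑ dd, ξc dd p * Hgen gp ginvp Φp ℓp b0 dd p)
          - ∑ dd, ξc dd p * Hgen gm ginvm Φm ℓm b0 dd p from by
      rw [← Finset.sum_sub_distrib]
      exact Finset.sum_congr rfl fun dd _ => by ring]
    ring
  -- tangential components of dξ match
  have htang : ∀ b0 a0 : Fin d,
      dext (flat gp ξp) (Φp p) (eF Φp a0 p) (eF Φp b0 p)
        = dext (flat gm ξm) (Φm p) (eF Φm a0 p) (eF Φm b0 p) := by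
    intro b0 a0
    have hflatdP : ∀ β, Differentiable ℝ (fun y => flat gp ξp y β) := by
      intro β
      have h0 : (fun y => flat gp ξp y β) = fun y => ∑ c, gp y β c * ξp y c := rfl
      rw [h0]
      refine Differentiable.fun_sum (fun c _ => ?_)
      have h1 := hgpd β c
      fun_prop
    have hflatdM : ∀ β, Differentiable ℝ (fun y => flat gm ξm y β) := by
      intro β
      have h0 : (fun y => flat gm ξm y β) = fun y => ∑ c, gm y β c * ξm y c := rfl
      rw [h0]
      refine Differentiable.fun_sum (fun c _ => ?_)
      have h1 := hgmd β c
      fun_prop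
    rw [dext_tangent (flat gp ξp) Φp hflatdP hΦp a0 b0 p,
      dext_tangent (flat gm ξm) Φm hflatdM hΦm a0 b0 p]
    have hcommon : ∀ (b' : Fin d) (q : Pt d),
        (∑ β, flat gp ξp (Φp q) β * eF Φp b' q β)
          = ∑ β, flat gm ξm (Φm q) β * eF Φm b' q β := by
      intro b' q
      have h1 : (∑ β, flat gp ξp (Φp q) β * eF Φp b' q β)
          = gdot gp (Φp q) (eF Φp b' q) (ξp (Φp q)) := by
        rw [← ip_flat]
        unfold ip
        exact Finset.sum_congr rfl fun β _ => rfl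
      have h2 : (∑ β, flat gm ξm (Φm q) β * eF Φm b' q β)
          = gdot gm (Φm q) (eF Φm b' q) (ξm (Φm q)) := by
        rw [← ip_flat]
        unfold ip
        exact Finset.sum_congr rfl fun β _ => rfl
      rw [h1, h2,
        gdot_expand_right gp (Φp q) (eF Φp b' q) (ξp (Φp q)) (fun b => ξc b q)
          (fun b => eF Φp b q) (hξpt q),
        gdot_expand_right gm (Φm q) (eF Φm b' q) (ξm (Φm q)) (fun b => ξc b q)
          (fun b => eF Φm b q) (hξmt q)]
      exact Finset.sum_congr rfl fun dd _ => by rw [hpull q b' dd]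
    rw [pd_congr' (fun q => hcommon b0 q) a0 p, pd_congr' (fun q => hcommon a0 q) b0 p]
  -- the jump of dξ on arbitrary frame vectors, via indicators
  have hΔ : ∀ v w : Option (Fin d),
      dext (flat gp ξp) (Φp p) (frameV Φp ℓp p v) (frameV Φp ℓp p w)
        - dext (flat gm ξm) (Φm p) (frameV Φm ℓm p v) (frameV Φm ℓm p w)
      = ∑ b, ((((∑ α, ∑ β, ℓp p α * eF Φp b p β * lieD gp ξp (Φp p) α β)
            - ∑ α, ∑ β, ℓm p α * eF Φm b p β * lieD gm ξm (Φm p) α β)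
          + 2 * ∑ dd, ξc dd p *
              (Hgen gp ginvp Φp ℓp b dd p - Hgen gm ginvm Φm ℓm b dd p))
        * ((if v = none then (1:ℝ) else 0) * (if w = some b then (1:ℝ) else 0)
          - (if w = none then (1:ℝ) else 0) * (if v = some b then (1:ℝ) else 0))) := by
    intro v w
    cases v with
    | none =>
      cases w with
      | none =>
        show dext (flat gp ξp) (Φp p) (ℓp p) (ℓp p)
            - dext (flat gm ξm) (Φm p) (ℓm p) (ℓm p) = _
        rw [dext_self, dext_self]
        simp
      | some b0 =>
        show dext (flat gp ξp) (Φp p) (ℓp p) (eF Φp b0 p)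
            - dext (flat gm ξm) (Φm p) (ℓm p) (eF Φm b0 p) = _
        rw [hjump b0]
        simp [Finset.sum_ite_eq]
    | some a0 =>
      cases w with
      | none =>
        show dext (flat gp ξp) (Φp p) (eF Φp a0 p) (ℓp p)
            - dext (flat gm ξm) (Φm p) (eF Φm a0 p) (ℓm p) = _
        rw [dext_antisymm (flat gp ξp) (Φp p) (eF Φp a0 p) (ℓp p),
          dext_antisymm (flat gm ξm) (Φm p) (eF Φm a0 p) (ℓm p)]
        rw [show -dext (flat gp ξp) (Φp p) (ℓp p) (eF Φp a0 p)
            - -dext (flat gm ξm) (Φm p) (ℓm p) (eF Φm a0 p)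
            = -(dext (flat gp ξp) (Φp p) (ℓp p) (eF Φp a0 p)
              - dext (flat gm ξm) (Φm p) (ℓm p) (eF Φm a0 p)) from by ring, hjump a0]
        simp [Finset.sum_ite_eq]
      | some b0 =>
        show dext (flat gp ξp) (Φp p) (eF Φp a0 p) (eF Φp b0 p)
            - dext (flat gm ξm) (Φm p) (eF Φm a0 p) (eF Φm b0 p) = _
        rw [htang b0 a0]
        simp
  -- coframe indicator values on the frame
  have hNind : ∀ v : Option (Fin d),
      ip (np p) (frameV Φp ℓp p v) = if v = none then (1:ℝ) else 0 := by
    intro v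
    cases v with
    | none => simpa [frameV] using hnℓp p
    | some a => simpa [frameV] using hnep p a
  have hWind : ∀ (a : Fin d) (v : Option (Fin d)),
      ip (wp a p) (frameV Φp ℓp p v) = if v = some a then (1:ℝ) else 0 := by
    intro a v
    cases v with
    | none => simpa [frameV] using hwℓp p a
    | some b' =>
      show ip (wp a p) (eF Φp b' p) = _
      rw [hwep p a b']
      by_cases h : a = b'
      · simp [h]
      · have h2 : ¬ b' = a := fun hh => h hh.symm
        simp [h, h2]
  -- rows of the 4-form agree across the matching
  have hF1 : ∀ v : Option (Fin d),
      ip (flat gp ηp (Φp p)) (frameV Φp ℓp p v)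
        = ip (flat gm ηm (Φm p)) (frameV Φm ℓm p v) := by
    intro v
    rw [ip_flat, ip_flat,
      gdot_expand_right gp (Φp p) (frameV Φp ℓp p v) (ηp (Φp p)) (fun b => ηc b p)
        (fun b => eF Φp b p) (hηpt p),
      gdot_expand_right gm (Φm p) (frameV Φm ℓm p v) (ηm (Φm p)) (fun b => ηc b p)
        (fun b => eF Φm b p) (hηmt p)]
    exact Finset.sum_congr rfl fun b _ => by rw [key_e p v b]
  have hF2 : ∀ v : Option (Fin d),
      ip (flat gp ξp (Φp p)) (frameV Φp ℓp p v)
        = ip (flat gm ξm (Φm p)) (frameV Φm ℓm p v) := by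
    intro v
    rw [ip_flat, ip_flat,
      gdot_expand_right gp (Φp p) (frameV Φp ℓp p v) (ξp (Φp p)) (fun b => ξc b p)
        (fun b => eF Φp b p) (hξpt p),
      gdot_expand_right gm (Φm p) (frameV Φm ℓm p v) (ξm (Φm p)) (fun b => ξc b p)
        (fun b => eF Φm b p) (hξmt p)]
    exact Finset.sum_congr rfl fun b _ => by rw [key_e p v b]
  -- decomposition of the rows over the dual coframe
  have hF1dec : (fun i => ip (flat gp ηp (Φp p)) (frameV Φp ℓp p (pick i)))
      = fun i => gdot gp (Φp p) (ℓp p) (ηp (Φp p)) * (if pick i = none then (1:ℝ) else 0)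
        + ∑ c, gdot gp (Φp p) (ηp (Φp p)) (eF Φp c p)
            * (if pick i = some c then (1:ℝ) else 0) := by
    funext i
    rw [ip_flat]
    cases hv : pick i with
    | none =>
      show gdot gp (Φp p) (ℓp p) (ηp (Φp p)) = _
      simp
    | some e =>
      show gdot gp (Φp p) (eF Φp e p) (ηp (Φp p)) = _
      rw [gdot_symm' gp (Φp p) (hgpsymm (Φp p))]
      simp [Finset.sum_ite_eq]
  have hF2dec : (fun i => ip (flat gp ξp (Φp p)) (frameV Φp ℓp p (pick i)))
      = fun i => gdot gp (Φp p) (ℓp p) (ξp (Φp p)) * (if pick i = none then (1:ℝ) else 0)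
        + ∑ c, gdot gp (Φp p) (ξp (Φp p)) (eF Φp c p)
            * (if pick i = some c then (1:ℝ) else 0) := by
    funext i
    rw [ip_flat]
    cases hv : pick i with
    | none =>
      show gdot gp (Φp p) (ℓp p) (ξp (Φp p)) = _
      simp
    | some e =>
      show gdot gp (Φp p) (eF Φp e p) (ξp (Φp p)) = _
      rw [gdot_symm' gp (Φp p) (hgpsymm (Φp p))]
      simp [Finset.sum_ite_eq]
  -- wedge forms as signed permutation sums of indicators
  have hwdg : ∀ a b c : Fin d,
      wdg4 (np p) (wp a p) (wp b p) (wp c p) (fun i => frameV Φp ℓp p (pick i))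
        = P4 (fun i => if pick i = none then (1:ℝ) else 0)
            (fun i => if pick i = some a then (1:ℝ) else 0)
            (fun i => if pick i = some b then (1:ℝ) else 0)
            (fun i => if pick i = some c then (1:ℝ) else 0) := by
    intro a b c
    unfold wdg4 P4
    refine Finset.sum_congr rfl fun σ _ => ?_
    simp only [hNind, hWind]
  -- assemble everything
  have hdiff := formdiff_eq gp gm ηp ξp ηm ξm (Φp p) (Φm p)
      (fun i => frameV Φp ℓp p (pick i)) (fun i => frameV Φm ℓm p (pick i))
      (fun b => (((∑ α, ∑ β, ℓp p α * eF Φp b p β * lieD gp ξp (Φp p) α β)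
            - ∑ α, ∑ β, ℓm p α * eF Φm b p β * lieD gm ξm (Φm p) α β)
          + 2 * ∑ dd, ξc dd p *
              (Hgen gp ginvp Φp ℓp b dd p - Hgen gm ginvm Φm ℓm b dd p)))
      (fun i => if pick i = none then (1:ℝ) else 0)
      (fun b i => if pick i = some b then (1:ℝ) else 0)
      (fun i => gdot gp (Φp p) (ℓp p) (ηp (Φp p)) * (if pick i = none then (1:ℝ) else 0)
        + ∑ c, gdot gp (Φp p) (ηp (Φp p)) (eF Φp c p)
            * (if pick i = some c then (1:ℝ) else 0))
      (fun i => gdot gp (Φp p) (ℓp p) (ξp (Φp p)) * (if pick i = none then (1:ℝ) else 0)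
        + ∑ c, gdot gp (Φp p) (ξp (Φp p)) (eF Φp c p)
            * (if pick i = some c then (1:ℝ) else 0))
      (fun i => congrFun hF1dec i)
      (fun i => ((hF1 (pick i)).symm).trans (congrFun hF1dec i))
      (fun i => congrFun hF2dec i)
      (fun i => ((hF2 (pick i)).symm).trans (congrFun hF2dec i))
      (fun i j => hΔ (pick i) (pick j))
  rw [hdiff]
  have hred : ∀ b : Fin d,
      P4 (fun i => gdot gp (Φp p) (ℓp p) (ηp (Φp p)) * (if pick i = none then (1:ℝ) else 0)
          + ∑ c, gdot gp (Φp p) (ηp (Φp p)) (eF Φp c p)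
              * (if pick i = some c then (1:ℝ) else 0))
        (fun i => gdot gp (Φp p) (ℓp p) (ξp (Φp p)) * (if pick i = none then (1:ℝ) else 0)
          + ∑ c, gdot gp (Φp p) (ξp (Φp p)) (eF Φp c p)
              * (if pick i = some c then (1:ℝ) else 0))
        (fun i => if pick i = none then (1:ℝ) else 0)
        (fun i => if pick i = some b then (1:ℝ) else 0)
      = ∑ c, gdot gp (Φp p) (ηp (Φp p)) (eF Φp c p)
          * ∑ a, gdot gp (Φp p) (ξp (Φp p)) (eF Φp a p)
            * P4 (fun i => if pick i = none then (1:ℝ) else 0)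
                (fun i => if pick i = some a then (1:ℝ) else 0)
                (fun i => if pick i = some b then (1:ℝ) else 0)
                (fun i => if pick i = some c then (1:ℝ) else 0) :=
    fun b => P4_reduce (fun i => if pick i = none then (1:ℝ) else 0)
      (fun b i => if pick i = some b then (1:ℝ) else 0)
      (gdot gp (Φp p) (ℓp p) (ηp (Φp p))) (gdot gp (Φp p) (ℓp p) (ξp (Φp p)))
      (fun c => gdot gp (Φp p) (ηp (Φp p)) (eF Φp c p))
      (fun a => gdot gp (Φp p) (ξp (Φp p)) (eF Φp a p)) b
  rw [Finset.sum_congr rfl fun b _ => by rw [hred b]]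
  rw [final_reorder
      (fun b => (((∑ α, ∑ β, ℓp p α * eF Φp b p β * lieD gp ξp (Φp p) α β)
            - ∑ α, ∑ β, ℓm p α * eF Φm b p β * lieD gm ξm (Φm p) α β)
          + 2 * ∑ dd, ξc dd p *
              (Hgen gp ginvp Φp ℓp b dd p - Hgen gm ginvm Φm ℓm b dd p)))
      (fun c => gdot gp (Φp p) (ηp (Φp p)) (eF Φp c p))
      (fun a => gdot gp (Φp p) (ξp (Φp p)) (eF Φp a p))
      (fun a b c => P4 (fun i => if pick i = none then (1:ℝ) else 0)
          (fun i => if pick i = some a then (1:ℝ) else 0)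
          (fun i => if pick i = some b then (1:ℝ) else 0)
          (fun i => if pick i = some c then (1:ℝ) else 0))]
  exact Finset.sum_congr rfl fun a _ => Finset.sum_congr rfl fun b _ =>
    Finset.sum_congr rfl fun c _ => by rw [hwdg a b c]
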